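/- arXiv:1109.3683 — 7 statements merged into one kernel-verified Lean document; each statement's English description precedes it below -/
import Mathlib

section
/- Let T be a compact operator on a Hilbert space H with trivial kernel, ker T = {0}. Then the system of root vectors of T (the union over all nonzero eigenvalues λ of the root subspaces ⋃_k ker(T - λ)^k) is a minimal system in H, i.e., no vector in the system lies in the closed linear span of the others. -/
/-!
Let `T` be a compact operator on a Banach space `X` and `μ ≠ 0`. The root subspace `N` of `T` at
`μ` is finite dimensional, so it is closed and equals `ker (T - μ)^m` for some `m`. The operator
induced by `T` on `X ⧸ N` is compact and does not have `μ` as an eigenvalue, so by the Fredholm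
alternative `(T - μ)^m` induces an invertible `G` on `X ⧸ N`. If `F̄ : X ⧸ N → X` is induced by
`(T - μ)^m` and `π` is the quotient map, then `P = 1 - F̄ G⁻¹ π` is a continuous projection onto
`N` vanishing on the range of `(T - μ)^m`, which contains every other root subspace because
`(t - μ)^m` and `(t - ν)^k` are coprime polynomials. Applying `P` reduces minimality to the linear
independence of the chosen basis of `N`.
-/

open Module End

theorem IsCompactOperator.liftQL {R M M₂ : Type*} [Ring R] [TopologicalSpace M]
    [AddCommGroup M] [IsTopologicalAddGroup M] [Module R M]
    [TopologicalSpace M₂] [AddCommGroup M₂] [Module R M₂]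
    (S : Submodule R M) {f : M →L[R] M₂} (hf : IsCompactOperator f) (h : S ≤ f.ker) :
    IsCompactOperator (S.liftQL f h) := by
  obtain ⟨K, hK, hfK⟩ := hf
  refine ⟨K, hK, ?_⟩
  have hpre : S.liftQL f h ⁻¹' K = S.mkQ '' (f ⁻¹' K) :=
    (Set.image_preimage_eq _ S.mkQ_surjective).symm
  rw [hpre, ← map_zero S.mkQ]
  exact S.isOpenQuotientMap_mkQ.isOpenMap.image_mem_nhds hfK

theorem Submodule.notMem_closure_span_of_mapsTo {R E F : Type*} [Semiring R]
    [AddCommMonoid E] [Module R E] [TopologicalSpace E]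
    [AddCommMonoid F] [Module R F] [TopologicalSpace F]
    (P : E →L[R] F) {s : Set E} {W : Submodule R F} (hW : IsClosed (W : Set F))
    (hsW : Set.MapsTo P s W) {x : E} (hx : P x ∉ W) :
    x ∉ closure (span R s : Set E) := fun hmem =>
  hx (closure_minimal (span_le.2 fun _ hy => hsW hy : span R s ≤ W.comap (P : E →ₗ[R] F))
    (hW.preimage P.continuous) hmem)

namespace Module.End

section CommRing

variable {R M : Type*} [CommRing R] [AddCommGroup M] [Module R M]

theorem exists_maxGenEigenspace_eq_genEigenspace_of_fg (f : End R M) (μ : R)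
    (h : (f.maxGenEigenspace μ).FG) : ∃ k : ℕ, f.maxGenEigenspace μ = f.genEigenspace μ k :=
  h.stabilizes_of_iSup_eq
    ⟨fun k => f.genEigenspace μ k,
      fun _ _ hkl => (f.genEigenspace μ).monotone (by exact_mod_cast hkl)⟩
    (f.iSup_genEigenspace_eq μ)

theorem not_hasEigenvalue_mapQ_maxGenEigenspace (f : End R M) (μ : R) :
    ¬ HasEigenvalue ((f.maxGenEigenspace μ).mapQ _ f
      ((mem_invtSubmodule f).1 (f.genEigenspace_mem_invtSubmodule μ ⊤))) μ := by
  set p := f.maxGenEigenspace μ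
  rw [hasEigenvalue_iff, not_not, Submodule.eq_bot_iff]
  intro y hy
  obtain ⟨x, rfl⟩ := p.mkQ_surjective y
  rw [mem_eigenspace_iff, Submodule.mkQ_apply, Submodule.mapQ_apply,
    ← Submodule.Quotient.mk_smul, Submodule.Quotient.eq] at hy
  obtain ⟨k, hk⟩ := (f.mem_maxGenEigenspace μ _).1 hy
  rw [Submodule.mkQ_apply, Submodule.Quotient.mk_eq_zero, f.mem_maxGenEigenspace]
  exact ⟨k + 1, by simpa [pow_succ, mul_apply] using hk⟩

end CommRing

theorem maxGenEigenspace_le_genEigenrange {K V : Type*} [Field K] [AddCommGroup V] [Module K V]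
    (f : End K V) {μ ν : K} (hμν : μ ≠ ν) (k : ℕ) :
    f.maxGenEigenspace μ ≤ f.genEigenrange ν k := by
  intro x hx
  obtain ⟨j, hj⟩ := (f.mem_maxGenEigenspace μ x).1 hx
  obtain ⟨a, b, hab⟩ := (Polynomial.isCoprime_X_sub_C_of_isUnit_sub
    (sub_ne_zero.2 hμν.symm).isUnit).pow (m := k) (n := j)
  rw [mul_comm a] at hab
  have key := congrArg (fun p => Polynomial.aeval f p x) hab
  simp only [map_add, map_mul, map_pow, map_sub, Polynomial.aeval_X, Polynomial.aeval_C,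
    map_one, Algebra.algebraMap_eq_smul_one, LinearMap.add_apply, mul_apply, hj,
    map_zero, add_zero, one_apply] at key
  rw [genEigenrange_nat]
  exact ⟨Polynomial.aeval f a x, key⟩

end Module.End

theorem Submodule.exists_clm_eqOn_id_of_semiconj {R X : Type*} [Ring R] [TopologicalSpace X]
    [AddCommGroup X] [IsTopologicalAddGroup X] [Module R X] (N : Submodule R X)
    {F : X →L[R] X} (hNF : N ≤ F.ker) {G : X ⧸ N →L[R] X ⧸ N} (hG : IsUnit G)
    (hFG : Function.Semiconj N.mkQ F G) :
    ∃ P : X →L[R] X, Set.EqOn P id N ∧ ∀ y, P (F y) = 0 := by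
  set E := ContinuousLinearEquiv.ofUnit hG.unit
  refine ⟨1 - N.liftQL F hNF ∘L (E.symm : X ⧸ N →L[R] X ⧸ N) ∘L N.mkQL,
    fun x hx => ?_, fun y => ?_⟩
  · simp [(Submodule.Quotient.mk_eq_zero N).2 hx]
  · have hE : N.mkQ (F y) = E (N.mkQ y) := hFG y
    simp [hE]

theorem IsCompactOperator.exists_clm_eqOn_maxGenEigenspace {𝕜 X : Type*}
    [NontriviallyNormedField 𝕜] [CompleteSpace 𝕜]
    [NormedAddCommGroup X] [NormedSpace 𝕜 X] [CompleteSpace X]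
    {T : X →L[𝕜] X} (hT : IsCompactOperator T) {μ : 𝕜} (hμ : μ ≠ 0)
    [FiniteDimensional 𝕜 (maxGenEigenspace (T : End 𝕜 X) μ)] :
    ∃ P : X →L[𝕜] X, Set.EqOn P id (maxGenEigenspace (T : End 𝕜 X) μ) ∧
      ∀ ν ≠ μ, Set.EqOn P 0 (maxGenEigenspace (T : End 𝕜 X) ν) := by
  obtain ⟨m, hm⟩ := exists_maxGenEigenspace_eq_genEigenspace_of_fg (T : End 𝕜 X) μ
    (Module.Finite.iff_fg.1 inferInstance)
  set N := maxGenEigenspace (T : End 𝕜 X) μ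
  have : IsClosed (N : Set X) := N.closed_of_finiteDimensional
  set F : X →L[𝕜] X := (T - μ • 1) ^ m
  have hFcoe : (F : End 𝕜 X) = ((T : End 𝕜 X) - μ • 1) ^ m := by simp [F]
  have hNF : N ≤ F.ker := by
    intro x hx
    rw [hm, mem_genEigenspace_nat] at hx
    rwa [LinearMap.mem_ker, hFcoe]
  set Tq : X ⧸ N →L[𝕜] X ⧸ N :=
    N.liftQL (N.mkQL ∘L T) fun x hx => (Submodule.Quotient.mk_eq_zero N).2 <|
      genEigenspace_mem_invtSubmodule (T : End 𝕜 X) μ ⊤ hx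
  have hTq : IsCompactOperator Tq := (hT.clm_comp N.mkQL).liftQL N _
  have hμTq : μ ∈ resolventSet 𝕜 Tq :=
    (hTq.hasEigenvalue_or_mem_resolventSet hμ).resolve_left
      (not_hasEigenvalue_mapQ_maxGenEigenspace (T : End 𝕜 X) μ)
  set G : X ⧸ N →L[𝕜] X ⧸ N := (Tq - μ • 1) ^ m
  have hG : IsUnit G := by
    rw [spectrum.mem_resolventSet_iff, Algebra.algebraMap_eq_smul_one, ← IsUnit.neg_iff,
      neg_sub] at hμTq
    exact hμTq.pow m
  have hFG : Function.Semiconj N.mkQ F G := by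
    have hstep : Function.Semiconj N.mkQ ⇑(T - μ • 1) ⇑(Tq - μ • 1) := fun _ => rfl
    have := hstep.iterate_right m
    rwa [← FunLike.coe_pow_eq_iterate, ← FunLike.coe_pow_eq_iterate] at this
  obtain ⟨P, hP_id, hPF⟩ := N.exists_clm_eqOn_id_of_semiconj hNF hG hFG
  refine ⟨P, hP_id, fun ν hν x hx => ?_⟩
  have hx' := maxGenEigenspace_le_genEigenrange (T : End 𝕜 X) hν m hx
  rw [genEigenrange_nat, ← hFcoe] at hx'
  obtain ⟨y, rfl⟩ := hx'
  exact hPF y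

theorem stmt3_general {H : Type*} [NormedAddCommGroup H] [InnerProductSpace ℂ H]
    [CompleteSpace H]
    (T : H →L[ℂ] H) (hT : IsCompactOperator (⇑T))
    {ι : Type*} (μ : ι → ℂ) (hμinj : Function.Injective μ) (hμ0 : ∀ i, μ i ≠ 0)
    (d : ι → ℕ) (v : (Σ i, Fin (d i)) → H)
    (hvmem : ∀ i (p : Fin (d i)),
      v ⟨i, p⟩ ∈ Module.End.maxGenEigenspace (T : H →ₗ[ℂ] H) (μ i))
    (hvspan : ∀ i, Submodule.span ℂ (Set.range fun p : Fin (d i) => v ⟨i, p⟩)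
        = Module.End.maxGenEigenspace (T : H →ₗ[ℂ] H) (μ i))
    (hvli : ∀ i, LinearIndependent ℂ fun p : Fin (d i) => v ⟨i, p⟩) :
    ∀ j : Σ i, Fin (d i),
      v j ∉ closure (Submodule.span ℂ (v '' {j' | j' ≠ j}) : Set H) := by
  rintro ⟨i₀, q⟩
  have : FiniteDimensional ℂ (maxGenEigenspace (T : End ℂ H) (μ i₀)) := by
    rw [← hvspan i₀]
    exact FiniteDimensional.span_of_finite ℂ (Set.finite_range _)
  obtain ⟨P, hP_id, hP_zero⟩ := hT.exists_clm_eqOn_maxGenEigenspace (hμ0 i₀)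
  set W := Submodule.span ℂ ((fun p : Fin (d i₀) => v ⟨i₀, p⟩) '' {p | p ≠ q})
  have : FiniteDimensional ℂ W := FiniteDimensional.span_of_finite ℂ (Set.toFinite _)
  refine Submodule.notMem_closure_span_of_mapsTo P W.closed_of_finiteDimensional ?_ ?_
  · rintro _ ⟨⟨i, p⟩, hne, rfl⟩
    by_cases hi : i = i₀
    · subst hi
      rw [SetLike.mem_coe, hP_id (hvmem i p)]
      exact Submodule.subset_span ⟨p, fun hpq => hne (hpq ▸ rfl), rfl⟩
    · rw [SetLike.mem_coe, hP_zero (μ i) (hμinj.ne hi) (hvmem i p)]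
      exact W.zero_mem
  · rw [hP_id (hvmem i₀ q)]
    exact (hvli i₀).notMem_span_image (by simp)

/-- for a compact operator `T` on a Hilbert space with trivial kernel,
the system of root vectors (unions of bases of the root subspaces over all nonzero
eigenvalues) is minimal: no vector of the system lies in the closed linear span
of the remaining ones. -/
theorem stmt3 {H : Type*} [NormedAddCommGroup H] [InnerProductSpace ℂ H]
    [CompleteSpace H]
    (T : H →L[ℂ] H) (hT : IsCompactOperator (⇑T))
    (hker : LinearMap.ker (T : H →ₗ[ℂ] H) = ⊥)
    {ι : Type*} (μ : ι → ℂ) (hμinj : Function.Injective μ) (hμ0 : ∀ i, μ i ≠ 0)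
    (hμeig : ∀ i, Module.End.HasEigenvalue (T : H →ₗ[ℂ] H) (μ i))
    (hμall : ∀ l : ℂ, l ≠ 0 → Module.End.HasEigenvalue (T : H →ₗ[ℂ] H) l → ∃ i, μ i = l)
    (d : ι → ℕ) (v : (Σ i, Fin (d i)) → H)
    (hvmem : ∀ i (p : Fin (d i)),
      v ⟨i, p⟩ ∈ Module.End.maxGenEigenspace (T : H →ₗ[ℂ] H) (μ i))
    (hvspan : ∀ i, Submodule.span ℂ (Set.range fun p : Fin (d i) => v ⟨i, p⟩)
        = Module.End.maxGenEigenspace (T : H →ₗ[ℂ] H) (μ i))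
    (hvli : ∀ i, LinearIndependent ℂ fun p : Fin (d i) => v ⟨i, p⟩) :
    ∀ j : Σ i, Fin (d i),
      v j ∉ closure (Submodule.span ℂ (v '' {j' | j' ≠ j}) : Set H) :=
  stmt3_general T hT μ hμinj hμ0 d v hvmem hvspan hvli
end

section
/- Let T be a compact operator on a Hilbert space H with ker T = {0}, let λ ≠ 0 be an eigenvalue of T, and let {e_p}_{p=1}^{m} be a basis of the root subspace N_λ(T) and {f_k}_{k=1}^{m} a basis of N_{λ̄}(T*). Then the Gram matrix G = (⟨e_p, f_k⟩)_{p,k=1}^{m} is nonsingular. -/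
/-!
Suppose the Gram matrix were singular. Then some nonzero `x ∈ N_λ(T)` is orthogonal to
`N_{λ̄}(T*)`. Since `N_λ(T)` is finite-dimensional, it equals `ker S` for `S = (T - λ)^n` with
`n` large, so also `ker S² = ker S`, while `ker S* ⊆ N_{λ̄}(T*)`. As `S` is a compact perturbation
of `(-λ)^n ≠ 0`, it is bounded below on `(ker S)ᗮ` and hence has closed range, so
`x ∈ (ker S*)ᗮ = range S`. Writing `x = S y` gives `S² y = S x = 0`, so `x = S y = 0`.
-/

open Filter Topology Module End ContinuousLinearMap

lemma Module.End.exists_maxGenEigenspace_eq_genEigenspace_of_fg_s5 {R M : Type*} [CommRing R]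
    [AddCommGroup M] [Module R M] {f : End R M} {μ : R} (h : (f.maxGenEigenspace μ).FG) :
    ∃ n : ℕ, f.maxGenEigenspace μ = f.genEigenspace μ n := by
  obtain ⟨s, hs⟩ := CompleteLattice.IsCompactElement.exists_finset_of_le_iSup _
    ((Submodule.fg_iff_compact _).1 h) (fun k : ℕ ↦ f.genEigenspace μ k)
    (iSup_genEigenspace_eq f μ).ge
  refine ⟨s.sup id, le_antisymm (hs.trans <| iSup₂_le fun k hk ↦ ?_) (genEigenspace_le_maximal ..)⟩
  exact (f.genEigenspace μ).monotone (by exact_mod_cast s.le_sup (f := id) hk)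

section CompactPerturbation

variable {𝕜 E : Type*} [NontriviallyNormedField 𝕜] [NormedAddCommGroup E] [NormedSpace 𝕜 E]

lemma IsCompactOperator.sub_smul_one_pow_sub_smul_one {T : E →L[𝕜] E}
    (hT : IsCompactOperator T) (μ : 𝕜) (n : ℕ) :
    IsCompactOperator ⇑((T - μ • 1) ^ n - (-μ) ^ n • 1) := by
  -- `a ^ n - b ^ n` is a multiple of `a - b`, which here is `T`.
  have h := ((Commute.one_right (T - μ • 1)).smul_right (-μ)).geom_sum₂_mul n
  rw [smul_pow, one_pow, neg_smul, sub_neg_eq_add, sub_add_cancel] at h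
  rw [← h]
  exact hT.clm_comp _

lemma exists_subseq_tendsto_of_tendsto_apply {S : E →L[𝕜] E} {c : 𝕜}
    (hK : IsCompactOperator ⇑(S - c • 1)) (hc : c ≠ 0) {u : ℕ → E} {R : ℝ}
    (hu : ∀ n, ‖u n‖ ≤ R) {y : E} (hSu : Tendsto (S ∘ u) atTop (𝓝 y)) :
    ∃ w, ∃ φ : ℕ → ℕ, StrictMono φ ∧ Tendsto (u ∘ φ) atTop (𝓝 w) := by
  obtain ⟨K, hKc, hKu⟩ := hK.image_subset_compact_of_bounded
    (f := ((S - c • 1 : E →L[𝕜] E) : E →ₗ[𝕜] E)) (Metric.isBounded_closedBall (x := 0) (r := R))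
  obtain ⟨a, -, φ, hφ, ha⟩ := hKc.tendsto_subseq fun n ↦ hKu ⟨u n, by simpa using hu n, rfl⟩
  refine ⟨c⁻¹ • (y - a), φ, hφ, ?_⟩
  have hu : u ∘ φ = fun n ↦ c⁻¹ • (S (u (φ n)) - (S - c • 1) (u (φ n))) := by
    funext n
    simp [smul_smul, inv_mul_cancel₀ hc]
  rw [hu]
  exact ((hSu.comp hφ.tendsto_atTop).sub ha).const_smul c⁻¹

end CompactPerturbation

section InnerProductSpace

variable {𝕜 E : Type*} [RCLike 𝕜] [NormedAddCommGroup E] [InnerProductSpace 𝕜 E]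

lemma exists_antilipschitzWith_comp_subtypeL_orthogonal_ker {S : E →L[𝕜] E} {c : 𝕜}
    (hK : IsCompactOperator ⇑(S - c • 1)) (hc : c ≠ 0) :
    ∃ K, AntilipschitzWith K (S ∘L S.kerᗮ.subtypeL) := by
  rw [antilipschitzWith_iff_exists_mul_le_norm]
  by_contra! h
  have hunit : ∀ n : ℕ, ∃ x : S.kerᗮ, ‖x‖ = 1 ∧ ‖S x‖ < 1 / (n + 1) := by
    intro n
    obtain ⟨x, hx⟩ := h (1 / (n + 1)) (by positivity)
    have hx0 : x ≠ 0 := by rintro rfl; simp at hx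
    refine ⟨(‖x‖⁻¹ : 𝕜) • x, norm_smul_inv_norm hx0, ?_⟩
    rw [Submodule.coe_smul, map_smul, norm_smul, norm_inv, RCLike.norm_ofReal, abs_norm,
      inv_mul_lt_iff₀ (norm_pos_iff.2 hx0), mul_comm]
    exact hx
  choose u hu1 hSu using hunit
  have hSu0 : Tendsto (S ∘ (↑) ∘ u) atTop (𝓝 0) :=
    squeeze_zero_norm (fun n ↦ (hSu n).le) tendsto_one_div_add_atTop_nhds_zero_nat
  obtain ⟨w, φ, hφ, hw⟩ := exists_subseq_tendsto_of_tendsto_apply hK hc (fun n ↦ (hu1 n).le) hSu0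
  have hwM : w ∈ S.kerᗮ := S.ker.isClosed_orthogonal.mem_of_tendsto hw
    (Eventually.of_forall fun n ↦ (u (φ n)).2)
  have hw1 : ‖w‖ = 1 := tendsto_nhds_unique hw.norm
    (tendsto_const_nhds.congr fun n ↦ (hu1 (φ n)).symm)
  have hSw : S w = 0 :=
    tendsto_nhds_unique ((S.continuous.tendsto w).comp hw) (hSu0.comp hφ.tendsto_atTop)
  have hw0 : w = 0 := S.ker.orthogonal_disjoint.le_bot ⟨hSw, hwM⟩
  simp [hw0] at hw1

lemma isClosed_range_of_isCompactOperator_sub_smul_one [CompleteSpace E] {S : E →L[𝕜] E}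
    {c : 𝕜} (hK : IsCompactOperator ⇑(S - c • 1)) (hc : c ≠ 0) : IsClosed (S.range : Set E) := by
  obtain ⟨K, hS⟩ := exists_antilipschitzWith_comp_subtypeL_orthogonal_ker hK hc
  have hrange : Set.range (S ∘L S.kerᗮ.subtypeL) = S.range := by
    ext y
    constructor
    · rintro ⟨x, rfl⟩
      exact ⟨x, rfl⟩
    · rintro ⟨x, rfl⟩
      obtain ⟨k, hk, z, hz, rfl⟩ := S.ker.exists_add_mem_mem_orthogonal x
      have hSk : S k = 0 := hk
      exact ⟨⟨z, hz⟩, by simp [hSk]⟩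
  rw [← hrange]
  exact hS.isClosed_range (S ∘L S.kerᗮ.subtypeL).uniformContinuous

lemma ContinuousLinearMap.disjoint_ker_orthogonal_ker_adjoint [CompleteSpace E]
    {S : E →L[𝕜] E} (hS : IsClosed (S.range : Set E)) (hS2 : ∀ x, S (S x) = 0 → S x = 0) :
    Disjoint S.ker (adjoint S).kerᗮ := by
  rw [Submodule.disjoint_def]
  intro x hx hx'
  rw [orthogonal_ker, adjoint_adjoint, hS.submodule_topologicalClosure_eq] at hx'
  obtain ⟨y, rfl⟩ := hx'
  exact hS2 y hx

lemma not_disjoint_span_orthogonal_span_of_det_inner_eq_zero {ι : Type*} [Fintype ι]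
    [DecidableEq ι] {e f : ι → E} (he : LinearIndependent 𝕜 e)
    (h : (Matrix.of fun i j ↦ inner 𝕜 (e i) (f j)).det = 0) :
    ¬Disjoint (Submodule.span 𝕜 (Set.range e)) (Submodule.span 𝕜 (Set.range f))ᗮ := by
  obtain ⟨v, hv0, hv⟩ := Matrix.exists_vecMul_eq_zero_iff.2 h
  set x := ∑ i, starRingEnd 𝕜 (v i) • e i
  have hx0 : x ≠ 0 := fun hx ↦ hv0 <| funext fun i ↦ by
    simpa using congrArg (starRingEnd 𝕜) (Fintype.linearIndependent_iff.1 he _ hx i)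
  have hxe : x ∈ Submodule.span 𝕜 (Set.range e) :=
    Submodule.sum_mem _ fun i _ ↦ Submodule.smul_mem _ _ (Submodule.subset_span ⟨i, rfl⟩)
  have hxf : Submodule.span 𝕜 {x} ⟂ Submodule.span 𝕜 (Set.range f) := by
    refine Submodule.isOrtho_span.2 ?_
    rintro _ rfl _ ⟨j, rfl⟩
    simpa [x, sum_inner, inner_smul_left, Matrix.vecMul, dotProduct] using congrFun hv j
  exact fun hdisj ↦ hx0 <| Submodule.disjoint_def.1 hdisj x hxe
    (Submodule.isOrtho_iff_le.1 hxf (Submodule.mem_span_singleton_self x))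

theorem IsCompactOperator.disjoint_maxGenEigenspace_orthogonal_maxGenEigenspace_adjoint
    [CompleteSpace E] {T : E →L[𝕜] E} (hT : IsCompactOperator T) {μ : 𝕜} (hμ : μ ≠ 0)
    (hfg : (maxGenEigenspace (T : End 𝕜 E) μ).FG) :
    Disjoint (maxGenEigenspace (T : End 𝕜 E) μ)
      (maxGenEigenspace ((adjoint T : E →L[𝕜] E) : End 𝕜 E) (starRingEnd 𝕜 μ))ᗮ := by
  obtain ⟨n, hn⟩ := End.exists_maxGenEigenspace_eq_genEigenspace_of_fg_s5 hfg
  set S := (T - μ • 1) ^ n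
  have hS : (S : End 𝕜 E) = ((T : End 𝕜 E) - μ • 1) ^ n := by simp [S, toLinearMap_pow]
  have hV : maxGenEigenspace (T : End 𝕜 E) μ = S.ker := by rw [hn, genEigenspace_nat, hS]
  have hS2 : ∀ x, S (S x) = 0 → S x = 0 := by
    intro x hx
    refine hV.le <| (mem_maxGenEigenspace _ _ _).2 ⟨n + n, ?_⟩
    rwa [pow_add, ← hS]
  have hW : (adjoint S).ker ≤
      maxGenEigenspace ((adjoint T : E →L[𝕜] E) : End 𝕜 E) (starRingEnd 𝕜 μ) := by
    have hadj : adjoint S = (adjoint T - starRingEnd 𝕜 μ • 1) ^ n := by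
      simp only [S, ← star_eq_adjoint, star_pow, star_sub, star_smul, star_one]
      rfl
    intro y hy
    refine (mem_maxGenEigenspace _ _ _).2 ⟨n, ?_⟩
    simpa [hadj, toLinearMap_pow] using hy
  have hK : IsCompactOperator ⇑(S - (-μ) ^ n • 1) := hT.sub_smul_one_pow_sub_smul_one μ n
  have hSclosed := isClosed_range_of_isCompactOperator_sub_smul_one hK
    (pow_ne_zero _ (neg_ne_zero.2 hμ))
  exact (disjoint_ker_orthogonal_ker_adjoint hSclosed hS2).mono hV.le (Submodule.orthogonal_le hW)

end InnerProductSpace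

theorem stmt5_general {H : Type*} [NormedAddCommGroup H] [InnerProductSpace ℂ H]
    [CompleteSpace H]
    (T : H →L[ℂ] H) (hT : IsCompactOperator (⇑T))
    (l : ℂ) (hl : l ≠ 0)
    (m : ℕ) (e f : Fin m → H)
    (hespan : Submodule.span ℂ (Set.range e)
        = Module.End.maxGenEigenspace (T : H →ₗ[ℂ] H) l)
    (heli : LinearIndependent ℂ e)
    (hfspan : Submodule.span ℂ (Set.range f)
        = Module.End.maxGenEigenspace
            ((ContinuousLinearMap.adjoint T : H →L[ℂ] H) : H →ₗ[ℂ] H) (starRingEnd ℂ l)) :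
    (Matrix.of fun p k : Fin m => (inner ℂ (e p) (f k) : ℂ)).det ≠ 0 := by
  intro hdet
  have hfg : (maxGenEigenspace (T : End ℂ H) l).FG :=
    hespan ▸ Submodule.fg_span (Set.finite_range e)
  refine not_disjoint_span_orthogonal_span_of_det_inner_eq_zero heli hdet ?_
  rw [hespan, hfspan]
  exact hT.disjoint_maxGenEigenspace_orthogonal_maxGenEigenspace_adjoint hl hfg

/-- for a compact injective operator `T` on a Hilbert space, a nonzero
eigenvalue `l`, a basis `e` of the root subspace `N_l(T)` and a basis `f` of
`N_{l̄}(T*)`, the Gram matrix `(⟨e p, f k⟩)` is nonsingular. -/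
theorem stmt5 {H : Type*} [NormedAddCommGroup H] [InnerProductSpace ℂ H]
    [CompleteSpace H]
    (T : H →L[ℂ] H) (hT : IsCompactOperator (⇑T)) (hker : LinearMap.ker (T : H →ₗ[ℂ] H) = ⊥)
    (l : ℂ) (hl : l ≠ 0) (hle : Module.End.HasEigenvalue (T : H →ₗ[ℂ] H) l)
    (m : ℕ) (e f : Fin m → H)
    (hemem : ∀ p, e p ∈ Module.End.maxGenEigenspace (T : H →ₗ[ℂ] H) l)
    (hespan : Submodule.span ℂ (Set.range e)
        = Module.End.maxGenEigenspace (T : H →ₗ[ℂ] H) l)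
    (heli : LinearIndependent ℂ e)
    (hfmem : ∀ k, f k ∈ Module.End.maxGenEigenspace
        ((ContinuousLinearMap.adjoint T : H →L[ℂ] H) : H →ₗ[ℂ] H) (starRingEnd ℂ l))
    (hfspan : Submodule.span ℂ (Set.range f)
        = Module.End.maxGenEigenspace
            ((ContinuousLinearMap.adjoint T : H →L[ℂ] H) : H →ₗ[ℂ] H) (starRingEnd ℂ l))
    (hfli : LinearIndependent ℂ f) :
    (Matrix.of fun p k : Fin m => (inner ℂ (e p) (f k) : ℂ)).det ≠ 0 :=
  stmt5_general T hT l hl m e f hespan heli hfspan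
end

section
/- Let B = diag(b_1,...,b_n) be diagonal nonsingular, and suppose the split boundary conditions (C with last n-k rows zero, D with first k rows zero) are regular, i.e., det T_{zB}(C,D) ≠ 0 for every admissible z ∈ ℂ. Then n = 2k and κ_+(Re(zB)) = κ_-(Re(zB)) = k for every admissible z. -/
/-!
Regularity makes `T_{zB}(C, D)` nonsingular for admissible `z`, and in a nonsingular matrix a set
of columns supported on a set `R` of rows has at most `#R` members. The columns with
`Re (z b_j) > 0` come from `C`, hence live on the first `k` rows, and the others on the last
`n - k` rows; so `κ₊ ≤ k` and `κ₋ ≤ n - k`, with equality since `κ₊ + κ₋ = n`. Passing from `z`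
to `-z` swaps `κ₊` and `κ₋`, which forces `k = n - k`.
-/

open Finset

theorem Matrix.card_le_card_of_det_ne_zero {K ι : Type*} [Field K] [Fintype ι] [DecidableEq ι]
    {A : Matrix ι ι K} (hA : A.det ≠ 0) (S R : Finset ι)
    (hAR : ∀ i ∉ R, ∀ j ∈ S, A i j = 0) : #S ≤ #R := by
  let restrict := LinearMap.funLeft K K ((↑) : R → ι)
  have hextend : ∀ j : S,
      Function.ExtendByZero.linearMap K ((↑) : R → ι) (restrict (A.col j)) = A.col j := by
    intro j
    ext i
    by_cases hi : i ∈ R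
    · exact Subtype.val_injective.extend_apply _ (0 : ι → K) (⟨i, hi⟩ : R)
    · rw [Function.ExtendByZero.linearMap_apply, Function.extend_apply' _ _ _ (by simpa)]
      exact (hAR i hi j j.2).symm
  have hcols :=
    (linearIndependent_cols_of_det_ne_zero hA).comp ((↑) : S → ι) Subtype.val_injective
  have hrestr : LinearIndependent K fun j : S => restrict (A.col j) := by
    refine .of_comp (Function.ExtendByZero.linearMap K ((↑) : R → ι)) ?_
    rw [show (_ ∘ fun j : S => restrict (A.col j)) = A.col ∘ (↑) from funext hextend]
    exact hcols
  simpa using hrestr.fintype_card_le_finrank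

theorem Complex.exists_forall_re_mul_ne_zero {ι : Type*} [Fintype ι] (b : ι → ℂ)
    (hb : ∀ j, b j ≠ 0) : ∃ z : ℂ, ∀ j, (z * b j).re ≠ 0 := by
  obtain ⟨t, ht⟩ := Infinite.exists_notMem_finset (univ.image fun j => (b j).re / (b j).im)
  refine ⟨1 + t * I, fun j h => ?_⟩
  have hre : (b j).re = t * (b j).im := by
    have : ((1 + t * I) * b j).re = (b j).re - t * (b j).im := by simp
    linarith
  by_cases him : (b j).im = 0
  · exact hb j (Complex.ext (by simpa [him] using hre) him)
  · exact ht (mem_image.mpr ⟨j, mem_univ j, by rw [div_eq_iff him, hre]⟩)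

theorem card_re_pos_add_card_re_neg {ι : Type*} [Fintype ι] {b : ι → ℂ} {z : ℂ}
    (hz : ∀ j, (z * b j).re ≠ 0) :
    #{j | 0 < (z * b j).re} + #{j | (z * b j).re < 0} = Fintype.card ι := by
  have hneg : ∀ j ∈ univ, (z * b j).re < 0 ↔ ¬ 0 < (z * b j).re := fun j _ =>
    ⟨fun h => h.not_gt, fun h => (hz j).lt_or_gt.resolve_right h⟩
  rw [filter_congr hneg, card_filter_add_card_filter_not, card_univ]

/-- `T_{zB}(C, D)`. -/
noncomputable def boundaryMatrix {m ι : Type*} (b : ι → ℂ) (C D : Matrix m ι ℂ) (z : ℂ) :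
    Matrix m ι ℂ :=
  Matrix.of fun i j => if 0 < (z * b j).re then C i j else D i j

section SplitBoundaryConditions

variable {n k : ℕ} {b : Fin n → ℂ} {C D : Matrix (Fin n) (Fin n) ℂ} {z : ℂ}

theorem card_re_pos_le_of_det_ne_zero (hC : ∀ i : Fin n, k ≤ (i : ℕ) → C i = 0)
    (hdet : (boundaryMatrix b C D z).det ≠ 0) : #{j | 0 < (z * b j).re} ≤ k := by
  have := Matrix.card_le_card_of_det_ne_zero hdet {j | 0 < (z * b j).re} {i | (i : ℕ) < k}
    fun i hi j hj => by
      simp only [mem_filter, mem_univ, true_and, not_lt] at hi hj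
      simp only [boundaryMatrix, Matrix.of_apply, if_pos hj, hC i hi, Pi.zero_apply]
  exact this.trans (Fin.card_filter_val_lt.trans_le (min_le_right n k))

theorem card_re_neg_le_of_det_ne_zero (hD : ∀ i : Fin n, (i : ℕ) < k → D i = 0)
    (hdet : (boundaryMatrix b C D z).det ≠ 0) : #{j | (z * b j).re < 0} ≤ n - k := by
  have := Matrix.card_le_card_of_det_ne_zero hdet {j | (z * b j).re < 0} {i | ¬ (i : ℕ) < k}
    fun i hi j hj => by
      simp only [mem_filter, mem_univ, true_and, not_not] at hi hj
      simp only [boundaryMatrix, Matrix.of_apply, if_neg hj.not_gt, hD i hi, Pi.zero_apply]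
  have hcard := card_filter_add_card_filter_not (s := univ) fun i : Fin n => (i : ℕ) < k
  rw [Fin.card_filter_val_lt, card_univ, Fintype.card_fin] at hcard
  omega

theorem card_re_pos_eq_and_card_re_neg_eq (hk : k ≤ n)
    (hC : ∀ i : Fin n, k ≤ (i : ℕ) → C i = 0) (hD : ∀ i : Fin n, (i : ℕ) < k → D i = 0)
    (hz : ∀ j, (z * b j).re ≠ 0)
    (hdet : (boundaryMatrix b C D z).det ≠ 0) :
    #{j | 0 < (z * b j).re} = k ∧ #{j | (z * b j).re < 0} = n - k := by
  have hpos := card_re_pos_le_of_det_ne_zero hC hdet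
  have hneg := card_re_neg_le_of_det_ne_zero hD hdet
  have htotal := card_re_pos_add_card_re_neg hz
  rw [Fintype.card_fin] at htotal
  omega

end SplitBoundaryConditions

/-- if split boundary conditions (last `n - k` rows of `C` zero,
first `k` rows of `D` zero, `k ≤ n`) are regular, i.e. `det T_{zB}(C,D) ≠ 0` for
every admissible `z`, then `n = 2k` and `κ₊(Re(zB)) = κ₋(Re(zB)) = k` for every
admissible `z`. -/
theorem stmt11 {n : ℕ} (k : ℕ) (hk : k ≤ n) (b : Fin n → ℂ) (hb : ∀ j, b j ≠ 0)
    (C D : Matrix (Fin n) (Fin n) ℂ)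
    (hC : ∀ i : Fin n, k ≤ (i : ℕ) → C i = 0)
    (hD : ∀ i : Fin n, (i : ℕ) < k → D i = 0)
    (hreg : ∀ z : ℂ, (∀ j, (z * b j).re ≠ 0) →
      (Matrix.of fun i j => if 0 < (z * b j).re then C i j else D i j).det ≠ 0) :
    n = 2 * k ∧ ∀ z : ℂ, (∀ j, (z * b j).re ≠ 0) →
      (Finset.univ.filter fun j : Fin n => 0 < (z * b j).re).card = k ∧
      (Finset.univ.filter fun j : Fin n => (z * b j).re < 0).card = k := by
  have hcount := fun z hz => card_re_pos_eq_and_card_re_neg_eq hk hC hD hz (hreg z hz)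
  obtain ⟨z₀, hz₀⟩ := Complex.exists_forall_re_mul_ne_zero b hb
  have hz₀' : ∀ j, (-z₀ * b j).re ≠ 0 := fun j => by
    rw [neg_mul, Complex.neg_re]
    exact neg_ne_zero.mpr (hz₀ j)
  have hflip : #{j | 0 < (-z₀ * b j).re} = #{j | (z₀ * b j).re < 0} := by simp
  have hn : n = 2 * k := by
    have := (hcount z₀ hz₀).2
    rw [← hflip, (hcount (-z₀) hz₀').1] at this
    omega
  exact ⟨hn, fun z hz => ⟨(hcount z hz).1, by rw [(hcount z hz).2]; omega⟩⟩
end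

section
/- Let n = 3, b_j = exp(2πij/3), and consider boundary conditions with C = I_3 and D having zero diagonal with all off-diagonal entries d_{jk} nonzero. Then for z = 1 the matrix T_{zB}(C,D) has determinant -d_{12} d_{21} ≠ 0, while for z = -1 the matrix T_{zB}(C,D) is singular (its determinant is 0). In particular, these boundary conditions are not regular. -/
/-! Since `b k⁻¹` has real part `-1/2` for `k = 0, 1` and `1` for `k = 2`, the matrix
`T_{zB}(C,D)` takes its first two columns from `D` and its last from `C = 1` when `z = 1`,
and the other way round when `z = -1`. Its determinant is then `d₀₀ d₁₁ - d₀₁ d₁₀`,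
resp. `-d₂₂`, and the zero diagonal of `d` gives `-d₀₁ d₁₀ ≠ 0` and `0`. -/

open Complex Real

theorem Complex.inv_exp_ofReal_mul_I_re (θ : ℝ) : (exp (θ * I))⁻¹.re = Real.cos θ := by
  rw [← exp_neg, ← neg_mul, ← ofReal_neg, exp_ofReal_mul_I_re, Real.cos_neg]

theorem re_inv_exp_two_pi_I_mul_succ_div_three (j : Fin 3) :
    (exp (2 * π * I * ((j : ℕ) + 1) / 3))⁻¹.re = if j = 2 then 1 else -(1 / 2) := by
  have hθ : 2 * π * I * ((j : ℕ) + 1) / 3 = ((2 * π * ((j : ℕ) + 1) / 3 : ℝ) : ℂ) * I := by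
    push_cast; ring
  rw [hθ, Complex.inv_exp_ofReal_mul_I_re]
  fin_cases j
  · rw [show 2 * π * ((0 : ℕ) + 1) / 3 = π - π / 3 by push_cast; ring, Real.cos_pi_sub,
      Real.cos_pi_div_three]; rfl
  · rw [show 2 * π * ((1 : ℕ) + 1) / 3 = π / 3 + π by push_cast; ring, Real.cos_add_pi,
      Real.cos_pi_div_three]; rfl
  · rw [show 2 * π * ((2 : ℕ) + 1) / 3 = 2 * π by push_cast; ring, Real.cos_two_pi]; rfl

namespace Matrix

variable {R : Type*} [CommRing R] (d : Fin 3 → Fin 3 → R)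

theorem det_fin_three_of_ite_eq_two :
    (of fun i k => if k = 2 then (1 : Matrix (Fin 3) (Fin 3) R) i k else -d i k).det
      = d 0 0 * d 1 1 - d 0 1 * d 1 0 := by
  simp [det_fin_three, one_apply]

theorem det_fin_three_of_ite_ne_two :
    (of fun i k => if k ≠ 2 then (1 : Matrix (Fin 3) (Fin 3) R) i k else -d i k).det
      = -d 2 2 := by
  simp [det_fin_three, one_apply]

end Matrix

/-- for `n = 3`, `b j = exp(2πij/3)`, `C = I₃` and
`D = -(d j k)` with zero diagonal and nonzero off-diagonal entries, the matrix
`T_{zB}(C,D)` (with `B = diag(b j⁻¹)`) for `z = 1` has determinant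
`-(d₁₂ d₂₁) ≠ 0`, while for `z = -1` it is singular; in particular these boundary
conditions are not regular. -/
theorem stmt12 (d : Fin 3 → Fin 3 → ℂ) (hdiag : ∀ j, d j j = 0)
    (hoff : ∀ j k, j ≠ k → d j k ≠ 0)
    (b : Fin 3 → ℂ)
    (hb : ∀ j : Fin 3, b j = Complex.exp (2 * Real.pi * Complex.I * ((j : ℕ) + 1) / 3))
    (C D : Matrix (Fin 3) (Fin 3) ℂ) (hC : C = 1)
    (hD : D = Matrix.of fun j k => -(d j k)) :
    (Matrix.of fun i k => if 0 < ((1 : ℂ) * (b k)⁻¹).re then C i k else D i k).det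
        = -(d 0 1 * d 1 0) ∧
    (Matrix.of fun i k => if 0 < ((1 : ℂ) * (b k)⁻¹).re then C i k else D i k).det ≠ 0 ∧
    (Matrix.of fun i k => if 0 < ((-1 : ℂ) * (b k)⁻¹).re then C i k else D i k).det = 0 ∧
    ¬ (∀ z : ℂ, (∀ j, (z * (b j)⁻¹).re ≠ 0) →
        (Matrix.of fun i k => if 0 < (z * (b k)⁻¹).re then C i k else D i k).det ≠ 0) := by
  have hre (k : Fin 3) : ((b k)⁻¹).re = if k = 2 then 1 else -(1 / 2) := by
    rw [hb, re_inv_exp_two_pi_I_mul_succ_div_three]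
  have hpos (k : Fin 3) : 0 < ((1 : ℂ) * (b k)⁻¹).re ↔ k = 2 := by
    rw [one_mul, hre]; split_ifs <;> norm_num [*]
  have hneg (k : Fin 3) : 0 < ((-1 : ℂ) * (b k)⁻¹).re ↔ k ≠ 2 := by
    rw [neg_one_mul, neg_re, hre]; split_ifs <;> norm_num [*]
  have hdet_one : (Matrix.of fun i k =>
      if 0 < ((1 : ℂ) * (b k)⁻¹).re then C i k else D i k).det = -(d 0 1 * d 1 0) := by
    simp_rw [hpos, hC, hD, Matrix.of_apply, Matrix.det_fin_three_of_ite_eq_two, hdiag]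
    ring
  have hdet_neg_one : (Matrix.of fun i k =>
      if 0 < ((-1 : ℂ) * (b k)⁻¹).re then C i k else D i k).det = 0 := by
    simp_rw [hneg, hC, hD, Matrix.of_apply, Matrix.det_fin_three_of_ite_ne_two, hdiag, neg_zero]
  refine ⟨hdet_one, ?_, hdet_neg_one, fun h => h (-1) (fun j => ?_) hdet_neg_one⟩
  · rw [hdet_one, neg_ne_zero]
    exact mul_ne_zero (hoff 0 1 (by decide)) (hoff 1 0 (by decide))
  · rw [neg_one_mul, neg_re, hre]
    split_ifs <;> norm_num
end

section
/- Let C ∈ ℂ^{n×n} be nonsingular and D = CM where M ∈ ℂ^{n×n} is a matrix all of whose principal minors (determinants of submatrices M(S,S) for all subsets S of indices) are nonzero. Then for every diagonal matrix A = diag(a_1,...,a_n) with Re(a_k) ≠ 0 for all k, the matrix T_A(C,D) is nonsingular. In particular, T_A(I_n, M) is nonsingular, and det T_A(C,D) = det C · det T_A(I_n, M). -/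
/-!
Columns can be chosen from `C` or from `C * M` by first choosing them from `1` or `M` and then
multiplying on the left by `C`, so `T_A(C, C M) = C · T_A(1, M)`. Ordering the indices so that the
columns taken from `1` come first makes `T_A(1, M)` block triangular with an identity block, and
its determinant is the principal minor of `M` on the remaining indices.
-/

namespace Matrix

variable {m n R : Type*}

/-- `colPiecewise (fun k => 0 < (a k).re) C D` is the paper's `T_A(C, D)`. -/
def colPiecewise (p : n → Prop) [DecidablePred p] (X Y : Matrix m n R) : Matrix m n R :=
  of fun i k => if p k then X i k else Y i k

theorem mul_colPiecewise [Fintype m] [NonUnitalNonAssocSemiring R] (p : n → Prop)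
    [DecidablePred p] (C : Matrix m m R) (X Y : Matrix m n R) :
    C * colPiecewise p X Y = colPiecewise p (C * X) (C * Y) := by
  ext i k
  by_cases hk : p k <;> simp [colPiecewise, mul_apply, hk]

theorem det_colPiecewise_one [Fintype n] [DecidableEq n] [CommRing R] (p : n → Prop)
    [DecidablePred p] (M : Matrix n n R) :
    (colPiecewise p 1 M).det = (M.toSquareBlockProp fun k => ¬p k).det := by
  have hblock : ∀ i, ¬p i → ∀ k, p k → colPiecewise p 1 M i k = 0 := fun i hi k hk => by
    have hik : i ≠ k := fun h => hi (h ▸ hk)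
    simp [colPiecewise, hk, one_apply_ne hik]
  rw [twoBlockTriangular_det _ p hblock]
  have hone : (colPiecewise p 1 M).toSquareBlockProp p = 1 := by
    ext i k
    simp [toSquareBlockProp_def, colPiecewise, k.2, one_apply, Subtype.ext_iff]
  have hM : (colPiecewise p 1 M).toSquareBlockProp (fun k => ¬p k) =
      M.toSquareBlockProp fun k => ¬p k := by
    ext i k
    simp [toSquareBlockProp_def, colPiecewise, k.2]
  rw [hone, hM, det_one, one_mul]

end Matrix

open Matrix in
theorem stmt13_general {n : ℕ} (C M : Matrix (Fin n) (Fin n) ℂ) (hC : C.det ≠ 0)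
    (hM : ∀ s : Finset (Fin n),
      (M.submatrix (Subtype.val : {x // x ∈ s} → Fin n)
        (Subtype.val : {x // x ∈ s} → Fin n)).det ≠ 0)
    (D : Matrix (Fin n) (Fin n) ℂ) (hD : D = C * M)
    (a : Fin n → ℂ) :
    (Matrix.of fun i k => if 0 < (a k).re then C i k else D i k).det ≠ 0 ∧
    (Matrix.of fun i k =>
        if 0 < (a k).re then (1 : Matrix (Fin n) (Fin n) ℂ) i k else M i k).det ≠ 0 ∧
    (Matrix.of fun i k => if 0 < (a k).re then C i k else D i k).det
      = C.det * (Matrix.of fun i k =>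
          if 0 < (a k).re then (1 : Matrix (Fin n) (Fin n) ℂ) i k else M i k).det := by
  let p : Fin n → Prop := fun k => 0 < (a k).re
  change (colPiecewise p C D).det ≠ 0 ∧ (colPiecewise p 1 M).det ≠ 0 ∧
    (colPiecewise p C D).det = C.det * (colPiecewise p 1 M).det
  have hfactor : colPiecewise p C D = C * colPiecewise p 1 M := by
    rw [hD, mul_colPiecewise, mul_one]
  have hminor : (colPiecewise p 1 M).det ≠ 0 := by
    rw [det_colPiecewise_one, equiv_block_det M (q := (· ∈ Finset.univ.filter fun k => ¬p k))
      fun k => Finset.mem_filter_univ k]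
    convert hM (Finset.univ.filter fun k => ¬p k)
    rfl
  rw [hfactor, det_mul]
  exact ⟨mul_ne_zero hC hminor, hminor, rfl⟩

/-- if `C` is nonsingular and `D = C M` where all principal minors of
`M` are nonzero, then for any `A = diag(a k)` with `Re (a k) ≠ 0`, the matrix
`T_A(C,D)` is nonsingular; moreover `T_A(I, M)` is nonsingular and
`det T_A(C,D) = det C · det T_A(I,M)`. -/
theorem stmt13 {n : ℕ} (C M : Matrix (Fin n) (Fin n) ℂ) (hC : C.det ≠ 0)
    (hM : ∀ s : Finset (Fin n),
      (M.submatrix (Subtype.val : {x // x ∈ s} → Fin n)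
        (Subtype.val : {x // x ∈ s} → Fin n)).det ≠ 0)
    (D : Matrix (Fin n) (Fin n) ℂ) (hD : D = C * M)
    (a : Fin n → ℂ) (ha : ∀ k, (a k).re ≠ 0) :
    (Matrix.of fun i k => if 0 < (a k).re then C i k else D i k).det ≠ 0 ∧
    (Matrix.of fun i k =>
        if 0 < (a k).re then (1 : Matrix (Fin n) (Fin n) ℂ) i k else M i k).det ≠ 0 ∧
    (Matrix.of fun i k => if 0 < (a k).re then C i k else D i k).det
      = C.det * (Matrix.of fun i k =>
          if 0 < (a k).re then (1 : Matrix (Fin n) (Fin n) ℂ) i k else M i k).det :=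
  stmt13_general C M hC hM D hD a
end

section
/- Let B = diag(c_1, ..., c_n) be a nonsingular selfadjoint (real) diagonal matrix, and define one boundary condition of the form Σ_k c'_k y_k(ξ_k) = 0 where ξ_k = 0 if c_k > 0 and ξ_k = 1 if c_k < 0, with coefficients c'_k not all zero. Then there exists a nonzero Φ ∈ L²([0,1]; ℂⁿ) orthogonal to every solution Y(·;λ) = (y_1(·;λ), ..., y_n(·;λ)) of -iBY' = λY satisfying this boundary condition, for every λ ∈ ℂ. Specifically, with y_k(x;λ) = a_k e^{i|c_k|λx} for c_k > 0 and y_k(x;λ) = a_k e^{i|c_k|λ(1-x)} for c_k < 0 subject to Σ c'_k a_k = 0, the vector Φ with components φ_k(x) = conj(c'_k)|c_k| on an interval of length α/|c_k| adjacent to the endpoint ξ_k (and zero elsewhere), for any α > 0 with α/|c_k| < 1, satisfies (Y(·;λ), Φ) = (Σ_k c'_k a_k) ∫_0^α e^{iλt} dt = 0. -/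
/-!
Take `Φ k` to be the constant `conj (c' k) * |c k|` on the interval of length `α / |c k|` at the
endpoint `ξ k`. The substitution `t = |c k| x` (after `x ↦ 1 - x` when `c k < 0`) turns the `k`-th
component of `(Y, Φ)` into `c' k * a k * ∫₀^α e^{iλt} dt`, so summing over `k` gives
`(∑ k, c' k * a k) * ∫₀^α e^{iλt} dt`, which vanishes by the boundary condition.
-/

open MeasureTheory Set intervalIntegral Complex ComplexConjugate

lemma not_ae_restrict_indicator_const_eq_zero {X M : Type*} [MeasurableSpace X] [Zero M]
    {μ : Measure X} {s t : Set X} {v : M} (hst : s ⊆ t) (hμs : μ s ≠ 0) (hv : v ≠ 0) :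
    ¬ ∀ᵐ x ∂μ.restrict t, s.indicator (fun _ => v) x = 0 := by
  rw [ae_iff]
  change μ.restrict t (Function.support _) ≠ 0
  rwa [support_indicator, Function.support_const hv, inter_univ, Measure.restrict_eq_self _ hst]

lemma integral_mul_conj_indicator_Ioc (g : ℝ → ℂ) {u a b w : ℝ} (hua : u ≤ a) (hab : a ≤ b)
    (hbw : b ≤ w) (v : ℂ) :
    ∫ x in u..w, g x * conj ((Ioc a b).indicator (fun _ => v) x) = (∫ x in a..b, g x) * conj v := by
  have hpt : ∀ x, g x * conj ((Ioc a b).indicator (fun _ => v) x)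
      = (Ioc a b).indicator (fun x => g x * conj v) x := by
    intro x
    by_cases hx : x ∈ Ioc a b <;> simp [hx]
  simp_rw [hpt]
  rw [integral_of_le (hua.trans (hab.trans hbw)), setIntegral_indicator measurableSet_Ioc,
    Ioc_inter_Ioc, max_eq_right hua, min_eq_right hbw, ← integral_of_le hab,
    intervalIntegral.integral_mul_const]

lemma integral_comp_mul_left_zero_div (f : ℝ → ℂ) {m : ℝ} (hm : m ≠ 0) (α : ℝ) :
    ∫ x in (0 : ℝ)..α / m, f (m * x) = (∫ t in (0 : ℝ)..α, f t) / m := by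
  rw [integral_comp_mul_left f hm, mul_zero, mul_div_cancel₀ _ hm, real_smul, ofReal_inv,
    inv_mul_eq_div]

def boundaryInterval (c β : ℝ) : Set ℝ := if 0 < c then Ioc 0 β else Ioc (1 - β) 1

lemma measurableSet_boundaryInterval {c β : ℝ} : MeasurableSet (boundaryInterval c β) := by
  unfold boundaryInterval; split_ifs <;> exact measurableSet_Ioc

lemma boundaryInterval_subset_Icc {c β : ℝ} (hβ : β ≤ 1) :
    boundaryInterval c β ⊆ Icc 0 1 := by
  unfold boundaryInterval; split_ifs
  · exact Ioc_subset_Icc_self.trans (Icc_subset_Icc_right hβ)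
  · exact Ioc_subset_Icc_self.trans (Icc_subset_Icc_left (by linarith))

lemma volume_boundaryInterval {c β : ℝ} : volume (boundaryInterval c β) = ENNReal.ofReal β := by
  unfold boundaryInterval; split_ifs <;> simp [Real.volume_Ioc]

lemma integral_solution_mul_conj_indicator_boundaryInterval {c α : ℝ} (hc : c ≠ 0) (hα : 0 ≤ α)
    (hα1 : α / |c| ≤ 1) (lam a w : ℂ) :
    ∫ x in (0 : ℝ)..1,
        (if 0 < c then a * exp (I * (|c| : ℝ) * lam * x)
          else a * exp (I * (|c| : ℝ) * lam * (1 - x)))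
        * conj ((boundaryInterval c (α / |c|)).indicator (fun _ => conj w * (|c| : ℝ)) x)
      = w * a * ∫ t in (0 : ℝ)..α, exp (I * lam * t) := by
  have hm : 0 < |c| := abs_pos.mpr hc
  have hβ : 0 ≤ α / |c| := div_nonneg hα hm.le
  set f : ℝ → ℂ := fun t => a * exp (I * lam * t)
  have hf : ∀ x : ℝ, a * exp (I * (|c| : ℝ) * lam * x) = f (|c| * x) := by
    intro x; simp only [f]; push_cast; ring_nf
  have hlayer : (∫ x in (0 : ℝ)..α / |c|, f (|c| * x)) * conj (conj w * (|c| : ℝ))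
      = w * a * ∫ t in (0 : ℝ)..α, exp (I * lam * t) := by
    rw [integral_comp_mul_left_zero_div f hm.ne', intervalIntegral.integral_const_mul]
    simp only [map_mul, conj_conj, conj_ofReal]
    field_simp [ofReal_ne_zero.mpr hm.ne']
  unfold boundaryInterval
  split_ifs
  · simp_rw [hf]
    rw [integral_mul_conj_indicator_Ioc _ le_rfl hβ hα1, hlayer]
  · have hf' : ∀ x : ℝ, a * exp (I * (|c| : ℝ) * lam * (1 - x)) = f (|c| * (1 - x)) := by
      intro x; rw [← hf]; push_cast; rfl
    simp_rw [hf']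
    rw [integral_mul_conj_indicator_Ioc _ (by linarith) (by linarith) le_rfl,
      integral_comp_sub_left (fun x => f (|c| * x)), sub_self, sub_sub_cancel, hlayer]

/-- for `B = diag(c 1, ..., c n)` real nonsingular and a boundary
condition `∑ k, c' k * y k (ξ k) = 0` (`ξ k = 0` for `c k > 0`, `ξ k = 1` for
`c k < 0`, coefficients not all zero), there is a nonzero `Φ ∈ L²([0,1]; ℂⁿ)`
orthogonal to every solution `y k (x) = a k e^{i|c k|λx}` (resp.
`a k e^{i|c k|λ(1-x)}`), `∑ c' k a k = 0`, of `-iBY' = λY` satisfying this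
condition, for every `λ ∈ ℂ`. -/
theorem stmt14 {n : ℕ} (c : Fin n → ℝ) (hc : ∀ k, c k ≠ 0)
    (c' : Fin n → ℂ) (hc' : ∃ k, c' k ≠ 0)
    (α : ℝ) (hα : 0 < α) (hα1 : ∀ k, α / |c k| < 1) :
    ∃ Φ : Fin n → ℝ → ℂ,
      (∀ k, IntegrableOn (Φ k) (Set.Icc (0 : ℝ) 1) volume) ∧
      (∃ k, ¬ (∀ᵐ x ∂(volume.restrict (Set.Icc (0 : ℝ) 1)), Φ k x = 0)) ∧
      ∀ (lam : ℂ) (a : Fin n → ℂ), (∑ k, c' k * a k) = 0 →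
        (∑ k, ∫ x in (0 : ℝ)..1,
          (if 0 < c k then a k * Complex.exp (Complex.I * (|c k| : ℝ) * lam * (x : ℂ))
           else a k * Complex.exp (Complex.I * (|c k| : ℝ) * lam * (1 - (x : ℂ))))
            * (starRingEnd ℂ) (Φ k x)) = 0 := by
  refine ⟨fun k => (boundaryInterval (c k) (α / |c k|)).indicator
      (fun _ => conj (c' k) * (|c k| : ℝ)), fun k => ?_, ?_, fun lam a hsum => ?_⟩
  · exact (integrableOn_const measure_Icc_lt_top.ne).indicator measurableSet_boundaryInterval
  · obtain ⟨k, hk⟩ := hc'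
    have hm : 0 < |c k| := abs_pos.mpr (hc k)
    refine ⟨k, not_ae_restrict_indicator_const_eq_zero (boundaryInterval_subset_Icc (hα1 k).le)
      ?_ ?_⟩
    · simpa [volume_boundaryInterval] using div_pos hα hm
    · simpa [hk] using hm.ne'
  · simp_rw [integral_solution_mul_conj_indicator_boundaryInterval (hc _) hα.le (hα1 _).le]
    rw [← Finset.sum_mul, hsum, zero_mul]
end

section
/- Let F : ℂ → ℂ be an entire function of exponential type which is bounded on four rays {θ_1 t : t > 0}, {θ_2 t : t > 0}, {θ_1 t : t < 0}, {θ_2 t : t < 0}, where θ_1, θ_2 are nonzero complex numbers not lying on a common line through the origin, and such that each of the four sectors determined by these rays has opening less than π. If in addition F(θ_1 t) → 0 as t → +∞, then F ≡ 0. -/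
/-!
Write points of `ℂ \ {0}` as `exp w`. The lines `ℝ θ₁` and `ℝ θ₂` become the horizontal lines
`im w ∈ arg θᵢ + πℤ`; since `θ₁, θ₂` are not collinear these alternate and every horizontal strip
between consecutive ones has width `< π`. On such a strip `F ∘ exp` grows at most like
`exp (A e^{|re w|})`, which the Phragmén–Lindelöf principle for strips of width `< π` tolerates, so
`F` is bounded on `ℂ`. By Liouville's theorem `F` is constant, and the limit along `θ₁ t` makes
the constant `0`.
-/

open Complex Filter Set
open scoped Real

theorem exists_exp_eq_mul_ofReal {θ w : ℂ} (hθ : θ ≠ 0) {k : ℤ} (hw : w.im = θ.arg + k * π) :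
    ∃ t : ℝ, exp w = θ * t := by
  refine ⟨(-1) ^ k * Real.exp w.re / ‖θ‖, ?_⟩
  have hθ' : ((‖θ‖ : ℝ) : ℂ) ≠ 0 := by simpa using hθ
  have hw' : w = w.re + θ.arg * I + k * (π * I) := by
    apply Complex.ext <;> simp [hw]
  have hpow : exp (k * (π * I)) = (-1) ^ k := by rw [exp_int_mul, exp_pi_mul_I]
  conv_lhs => rw [hw', exp_add, exp_add, hpow]
  push_cast
  field_simp
  linear_combination norm_mul_exp_arg_mul_I θ

theorem exists_eq_ofReal_mul_of_arg_eq {θ₁ θ₂ : ℂ} (hθ₁ : θ₁ ≠ 0) {k : ℤ}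
    (h : θ₂.arg = θ₁.arg + k * π) : ∃ r : ℝ, θ₂ = r * θ₁ := by
  obtain ⟨t, ht⟩ := exists_exp_eq_mul_ofReal (w := θ₂.arg * I) hθ₁ (by simpa using h)
  refine ⟨‖θ₂‖ * t, ?_⟩
  push_cast
  linear_combination ((‖θ₂‖ : ℝ) : ℂ) * ht - norm_mul_exp_arg_mul_I θ₂

theorem exists_add_int_mul_pi_le_lt (α y : ℝ) : ∃ k : ℤ, α + k * π ≤ y ∧ y < α + k * π + π := by
  have h := sub_toIcoDiv_zsmul_mem_Ico Real.pi_pos α y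
  rw [zsmul_eq_mul] at h
  exact ⟨_, by linarith [h.1], by linarith [h.2]⟩

section

variable {F : ℂ → ℂ} {M : ℝ}

theorem norm_comp_exp_le_of_im_eq {θ : ℂ} (hθ : θ ≠ 0) (hM : ∀ t : ℝ, ‖F (θ * t)‖ ≤ M) {k : ℤ}
    {w : ℂ} (hw : w.im = θ.arg + k * π) : ‖F (exp w)‖ ≤ M := by
  obtain ⟨t, ht⟩ := exists_exp_eq_mul_ofReal hθ hw
  exact ht ▸ hM t

theorem norm_comp_exp_le_of_exponential_type {c A : ℝ}
    (hexp : ∀ z, ‖F z‖ ≤ c * Real.exp (A * ‖z‖)) (w : ℂ) :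
    ‖F (exp w)‖ ≤ |c| * Real.exp (|A| * Real.exp |w.re|) := by
  have hexp_w : ‖exp w‖ ≤ Real.exp |w.re| := by
    rw [norm_exp]
    exact Real.exp_le_exp.2 (le_abs_self _)
  have hA : A * ‖exp w‖ ≤ |A| * Real.exp |w.re| :=
    calc A * ‖exp w‖ ≤ |A| * ‖exp w‖ := by gcongr; exact le_abs_self A
      _ ≤ |A| * Real.exp |w.re| := by gcongr
  calc ‖F (exp w)‖ ≤ c * Real.exp (A * ‖exp w‖) := hexp _
    _ ≤ |c| * Real.exp (|A| * Real.exp |w.re|) := by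
      gcongr
      exact le_abs_self c

theorem norm_comp_exp_le_of_strip (hF : Differentiable ℂ F) {c A : ℝ}
    (hexp : ∀ z, ‖F z‖ ≤ c * Real.exp (A * ‖z‖)) {a b : ℝ} (hab : a < b) (hba : b - a < π)
    (ha : ∀ w : ℂ, w.im = a → ‖F (exp w)‖ ≤ M) (hb : ∀ w : ℂ, w.im = b → ‖F (exp w)‖ ≤ M)
    {w : ℂ} (hwa : a ≤ w.im) (hwb : w.im ≤ b) : ‖F (exp w)‖ ≤ M := by
  refine PhragmenLindelof.horizontal_strip (f := F ∘ exp)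
    (hF.comp differentiable_exp).diffContOnCl ⟨1, ?_, |A|, ?_⟩ ha hb hwa hwb
  · rwa [lt_div_iff₀ (sub_pos.2 hab), one_mul]
  · refine Asymptotics.IsBigO.of_bound |c| (Eventually.of_forall fun z => ?_)
    rw [one_mul, Real.norm_of_nonneg (Real.exp_pos _).le]
    exact norm_comp_exp_le_of_exponential_type hexp z

theorem norm_comp_exp_le_of_bounded_on_lines (hF : Differentiable ℂ F) {c A : ℝ}
    (hexp : ∀ z, ‖F z‖ ≤ c * Real.exp (A * ‖z‖)) {θ₁ θ₂ : ℂ} (hθ₁ : θ₁ ≠ 0) (hθ₂ : θ₂ ≠ 0)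
    (hind : ¬ ∃ r : ℝ, θ₂ = r * θ₁) (hM₁ : ∀ t : ℝ, ‖F (θ₁ * t)‖ ≤ M)
    (hM₂ : ∀ t : ℝ, ‖F (θ₂ * t)‖ ≤ M) (w : ℂ) : ‖F (exp w)‖ ≤ M := by
  obtain ⟨m, hm₁, hm₂⟩ := exists_add_int_mul_pi_le_lt θ₁.arg w.im
  obtain ⟨n, hn₁, hn₂⟩ := exists_add_int_mul_pi_le_lt θ₂.arg w.im
  have hne : θ₁.arg + m * π ≠ θ₂.arg + n * π := fun h =>
    hind (exists_eq_ofReal_mul_of_arg_eq hθ₁ (k := m - n) (by push_cast; linarith))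
  -- `w.im` lies between the higher of the two lines just below it and the line of the other
  -- family just above it; these are less than `π` apart.
  rcases hne.lt_or_gt with h | h
  · refine norm_comp_exp_le_of_strip hF hexp (by linarith) (by linarith)
      (fun z hz => norm_comp_exp_le_of_im_eq hθ₂ hM₂ hz)
      (fun z hz => norm_comp_exp_le_of_im_eq hθ₁ hM₁ (k := m + 1) (by rw [hz]; push_cast; ring))
      hn₁ hm₂.le
  · refine norm_comp_exp_le_of_strip hF hexp (by linarith) (by linarith)
      (fun z hz => norm_comp_exp_le_of_im_eq hθ₁ hM₁ hz)
      (fun z hz => norm_comp_exp_le_of_im_eq hθ₂ hM₂ (k := n + 1) (by rw [hz]; push_cast; ring))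
      hm₁ hn₂.le

theorem isBounded_range_of_norm_comp_exp_le (hM : ∀ w, ‖F (exp w)‖ ≤ M) :
    Bornology.IsBounded (range F) := by
  have hsub : range F ⊆ insert (F 0) (range (F ∘ exp)) := by
    rintro _ ⟨z, rfl⟩
    rcases eq_or_ne z 0 with rfl | hz
    · exact mem_insert _ _
    · obtain ⟨w, rfl⟩ : z ∈ range exp := by rwa [range_exp]
      exact mem_insert_of_mem _ ⟨w, rfl⟩
  refine (Bornology.IsBounded.insert ?_ _).subset hsub
  exact isBounded_iff_forall_norm_le.2 ⟨M, by rintro _ ⟨w, rfl⟩; exact hM w⟩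

end

/-- an entire function `F` of exponential type, bounded on the four
rays through `θ₁, -θ₁, θ₂, -θ₂` (where `θ₁, θ₂` do not lie on a common line through
the origin, so the four sectors have opening `< π`), which tends to `0` along the
ray `θ₁ t`, `t → +∞`, vanishes identically. -/
theorem stmt16 (F : ℂ → ℂ) (hF : Differentiable ℂ F)
    (hexp : ∃ c A : ℝ, ∀ z : ℂ, ‖F z‖ ≤ c * Real.exp (A * ‖z‖))
    (θ₁ θ₂ : ℂ) (hθ₁ : θ₁ ≠ 0) (hθ₂ : θ₂ ≠ 0)
    (hind : ¬ ∃ r : ℝ, θ₂ = (r : ℂ) * θ₁)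
    (hbdd : ∃ M : ℝ, ∀ t : ℝ, ‖F (θ₁ * t)‖ ≤ M ∧ ‖F (θ₂ * t)‖ ≤ M)
    (hlim : Tendsto (fun t : ℝ => F (θ₁ * t)) atTop (nhds 0)) :
    ∀ z : ℂ, F z = 0 := by
  obtain ⟨c, A, hexp⟩ := hexp
  obtain ⟨M, hM⟩ := hbdd
  have hbounded : Bornology.IsBounded (range F) :=
    isBounded_range_of_norm_comp_exp_le <| norm_comp_exp_le_of_bounded_on_lines hF hexp hθ₁ hθ₂
      hind (fun t => (hM t).1) (fun t => (hM t).2)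
  intro z
  have hconst : ∀ t : ℝ, F (θ₁ * t) = F z := fun t => hF.apply_eq_apply_of_bounded hbounded _ _
  exact tendsto_nhds_unique (by simpa only [hconst] using tendsto_const_nhds) hlim
end
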